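/- arXiv:math/0404257 — 2 statements merged into one kernel-verified Lean document; each statement's English description precedes it below -/
import Mathlib

section
/- Let M_• be a simplicial topological space and A^• an abelian sheaf on M_•. Then for any open cover U_• of M_• and all n ≥ 1, H^n(U_•; I(A)^•) = 0; indeed the complex C^*(U_•;I(A)^•) is homotopically trivial. -/
open TopologicalSpace

universe u

namespace GroupoidCohomology

/-- Morphisms `[k] → [n]` of the simplicial category `Δ`: nondecreasing maps. -/
abbrev DeltaHom (k n : ℕ) : Type := Fin (k + 1) →o Fin (n + 1)

/-- Morphisms of the semi-simplicial category `Δ'`: strictly increasing maps. -/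
def StrictHom (k n : ℕ) : Type := {f : DeltaHom k n // StrictMono f}

instance (k n : ℕ) : Finite (DeltaHom k n) :=
  Finite.of_injective (fun f => (f : Fin (k + 1) → Fin (n + 1))) DFunLike.coe_injective

instance (k n : ℕ) : Finite (StrictHom k n) := by
  unfold StrictHom; infer_instance

lemma StrictHom.le_target {k n : ℕ} (f : StrictHom k n) : k ≤ n := by
  have : Fintype.card (Fin (k + 1)) ≤ Fintype.card (Fin (n + 1)) :=
    Fintype.card_le_of_injective _ f.2.injective
  simpa using this

/-- The `i`-th coface map `ε_i : [n] → [n+1]`, the increasing injection omitting `i`. -/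
def deltaEps (n : ℕ) (i : Fin (n + 2)) : DeltaHom n (n + 1) :=
  (Fin.succAboveOrderEmb i).toOrderHom

lemma deltaEps_strictMono (n : ℕ) (i : Fin (n + 2)) : StrictMono (deltaEps n i) :=
  (Fin.succAboveOrderEmb i).strictMono

/-- A simplicial topological space: a contravariant functor from `Δ` to spaces. -/
structure SimplicialSpace : Type (u + 1) where
  X : ℕ → Type u
  topX : ∀ n, TopologicalSpace (X n)
  map : ∀ {k n : ℕ}, DeltaHom k n → X n → X k
  map_continuous : ∀ {k n : ℕ} (f : DeltaHom k n), Continuous (map f)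
  map_id : ∀ {n : ℕ} (x : X n), map (OrderHom.id) x = x
  map_comp : ∀ {l k n : ℕ} (g : DeltaHom l k) (f : DeltaHom k n) (x : X n),
      map g (map f x) = map (f.comp g) x

attribute [instance] SimplicialSpace.topX

variable {M : SimplicialSpace.{u}}

/-- An abelian presheaf on a topological space, given by its groups of sections
and restriction maps. -/
structure AbPresheaf (X : Type u) [TopologicalSpace X] : Type (u + 1) where
  sec : Opens X → Type u
  grp : ∀ U, AddCommGroup (sec U)
  res : ∀ {U V : Opens X}, U ≤ V → sec V →+ sec U
  res_rfl : ∀ {U : Opens X} (s : sec U), res le_rfl s = s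
  res_res : ∀ {U V W : Opens X} (h₁ : U ≤ V) (h₂ : V ≤ W) (s : sec W),
      res h₁ (res h₂ s) = res (h₁.trans h₂) s

attribute [instance] AbPresheaf.grp

/-- The sheaf condition for an abelian presheaf. -/
def AbPresheaf.IsSheaf {X : Type u} [TopologicalSpace X] (F : AbPresheaf X) : Prop :=
  ∀ {ι : Type u} (U : ι → Opens X) (s : ∀ i, F.sec (U i)),
    (∀ i j, F.res (inf_le_left : U i ⊓ U j ≤ U i) (s i)
        = F.res (inf_le_right : U i ⊓ U j ≤ U j) (s j)) →
    ∃! t : F.sec (iSup U), ∀ i, F.res (le_iSup U i) t = s i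

lemma SimplicialSpace.idLe (M : SimplicialSpace.{u}) {n : ℕ} {U V : Opens (M.X n)}
    (h : ∀ x ∈ U, M.map OrderHom.id x ∈ V) : U ≤ V :=
  fun x hx => by have := h x hx; rwa [M.map_id] at this

/-- An abelian sheaf (presheaf) on a simplicial space: a family of abelian presheaves
`Sh n` on `M.X n` together with compatible restriction maps
`f̃* : A^k(V) → A^n(U)` whenever `f̃(U) ⊆ V`, functorial in `f`. -/
structure SimpAbPresheaf (M : SimplicialSpace.{u}) : Type (u + 1) where
  Sh : ∀ n : ℕ, AbPresheaf (M.X n)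
  cmap : ∀ {k n : ℕ} (f : DeltaHom k n) {U : Opens (M.X n)} {V : Opens (M.X k)},
      (∀ x ∈ U, M.map f x ∈ V) → ((Sh k).sec V →+ (Sh n).sec U)
  cmap_res : ∀ {k n : ℕ} (f : DeltaHom k n) {U U' : Opens (M.X n)} {V V' : Opens (M.X k)}
      (hU : U' ≤ U) (hV : V' ≤ V)
      (h : ∀ x ∈ U, M.map f x ∈ V) (h' : ∀ x ∈ U', M.map f x ∈ V')
      (sv : (Sh k).sec V),
      (Sh n).res hU (cmap f h sv) = cmap f h' ((Sh k).res hV sv)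
  cmap_id : ∀ {n : ℕ} {U V : Opens (M.X n)}
      (h : ∀ x ∈ U, M.map OrderHom.id x ∈ V) (sv : (Sh n).sec V),
      cmap OrderHom.id h sv = (Sh n).res (M.idLe h) sv
  cmap_comp : ∀ {l k n : ℕ} (g : DeltaHom l k) (f : DeltaHom k n)
      {U : Opens (M.X n)} {V : Opens (M.X k)} {W : Opens (M.X l)}
      (hf : ∀ x ∈ U, M.map f x ∈ V) (hg : ∀ x ∈ V, M.map g x ∈ W)
      (sw : (Sh l).sec W),
      cmap f hf (cmap g hg sw)
        = cmap (f.comp g)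
            (fun x hx => by rw [← M.map_comp g f x]; exact hg _ (hf x hx)) sw

/-- `𝒜` is a sheaf if each of its levels satisfies the sheaf condition. -/
def SimpAbPresheaf.IsSheaf (𝒜 : SimpAbPresheaf M) : Prop := ∀ n, (𝒜.Sh n).IsSheaf

/-- An open cover of a simplicial space. -/
structure Cover (M : SimplicialSpace.{u}) : Type (u + 1) where
  idx : ℕ → Type u
  U : ∀ n, idx n → Opens (M.X n)
  covers : ∀ (n : ℕ) (x : M.X n), ∃ i, x ∈ U n i

/-- The index set `Λ_n` of the semi-simplicial cover `σ𝒰` associated to a cover `𝒰`: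
maps assigning to each morphism of `Δ'` with target `[n]` an index. -/
def Cover.Lambda (𝒰 : Cover M) (n : ℕ) : Type u :=
  ∀ (k : ℕ), StrictHom k n → 𝒰.idx k

def Cover.lambdaSet (𝒰 : Cover M) {n : ℕ} (l : 𝒰.Lambda n) : Set (M.X n) :=
  {x | ∀ (k : ℕ) (f : StrictHom k n), M.map f.1 x ∈ 𝒰.U k (l k f)}

lemma Cover.isOpen_lambdaSet (𝒰 : Cover M) {n : ℕ} (l : 𝒰.Lambda n) :
    IsOpen (𝒰.lambdaSet l) := by
  have : 𝒰.lambdaSet l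
      = ⋂ (k : Fin (n + 1)), ⋂ (f : StrictHom k n), (M.map f.1) ⁻¹' (𝒰.U k (l k f)) := by
    ext x
    simp only [Cover.lambdaSet, Set.mem_setOf_eq, Set.mem_iInter, Set.mem_preimage]
    constructor
    · intro h k f; exact h k f
    · intro h k f
      exact h ⟨k, Nat.lt_succ_of_le f.le_target⟩ f
  rw [this]
  exact isOpen_iInter_of_finite fun k =>
    isOpen_iInter_of_finite fun f =>
      (𝒰.U _ _).isOpen.preimage (M.map_continuous f.1)

/-- The open set `U^n_λ = ⋂_{f} f̃⁻¹(U^k_{λ(f)})`. -/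
def Cover.lambdaOpen (𝒰 : Cover M) {n : ℕ} (l : 𝒰.Lambda n) : Opens (M.X n) :=
  ⟨𝒰.lambdaSet l, 𝒰.isOpen_lambdaSet l⟩

lemma Cover.mem_lambdaOpen (𝒰 : Cover M) {n : ℕ} {l : 𝒰.Lambda n} {x : M.X n} :
    x ∈ 𝒰.lambdaOpen l ↔ ∀ (k : ℕ) (f : StrictHom k n), M.map f.1 x ∈ 𝒰.U k (l k f) :=
  Iff.rfl

/-- The space of Čech `n`-cochains `C^n(𝒰;𝒜) = C^n_{ss}(σ𝒰;𝒜) = ∏_{λ∈Λ_n} 𝒜^n(U^n_λ)`. -/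
abbrev Cochain (𝒜 : SimpAbPresheaf M) (𝒰 : Cover M) (n : ℕ) : Type u :=
  ∀ l : 𝒰.Lambda n, (𝒜.Sh n).sec (𝒰.lambdaOpen l)

/-- `ε̃ₖ(λ)`: pull back an index `λ ∈ Λ_{n+1}` along the coface `ε_k`. -/
def Cover.epsPull (𝒰 : Cover M) {n : ℕ} (k : Fin (n + 2)) (l : 𝒰.Lambda (n + 1)) :
    𝒰.Lambda n :=
  fun r f => l r ⟨(deltaEps n k).comp f.1, (deltaEps_strictMono n k).comp f.2⟩

lemma Cover.mem_epsPull (𝒰 : Cover M) {n : ℕ} (k : Fin (n + 2)) (l : 𝒰.Lambda (n + 1))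
    {x : M.X (n + 1)} (hx : x ∈ 𝒰.lambdaOpen l) :
    M.map (deltaEps n k) x ∈ 𝒰.lambdaOpen (𝒰.epsPull k l) := by
  intro r f
  rw [M.map_comp f.1 (deltaEps n k) x]
  exact hx r _

/-- The Čech differential `(dc)_λ = Σ_k (−1)^k ε̃ₖ^* c_{ε̃ₖ(λ)}`. -/
def coboundary (𝒜 : SimpAbPresheaf M) (𝒰 : Cover M) (n : ℕ) :
    Cochain 𝒜 𝒰 n →+ Cochain 𝒜 𝒰 (n + 1) where
  toFun c := fun l => ∑ k : Fin (n + 2),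
    ((-1 : ℤ) ^ (k : ℕ)) •
      𝒜.cmap (deltaEps n k) (fun x hx => 𝒰.mem_epsPull k l hx) (c (𝒰.epsPull k l))
  map_zero' := by
    funext l
    simp
  map_add' c₁ c₂ := by
    funext l
    simp [smul_add, Finset.sum_add_distrib]

/-- Čech cocycles. -/
def cocycles (𝒜 : SimpAbPresheaf M) (𝒰 : Cover M) (n : ℕ) : AddSubgroup (Cochain 𝒜 𝒰 n) :=
  (coboundary 𝒜 𝒰 n).ker

/-- Čech coboundaries (with the convention `C^{-1} = 0`). -/
def boundaries (𝒜 : SimpAbPresheaf M) (𝒰 : Cover M) : (n : ℕ) → AddSubgroup (Cochain 𝒜 𝒰 n)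
  | 0 => ⊥
  | (n + 1) => (coboundary 𝒜 𝒰 n).range

/-- The Čech cohomology `H^n(𝒰;𝒜) = H^n_{ss}(σ𝒰;𝒜)` of a cover. -/
def coverH (𝒜 : SimpAbPresheaf M) (𝒰 : Cover M) (n : ℕ) : Type u :=
  cocycles 𝒜 𝒰 n ⧸ (boundaries 𝒜 𝒰 n).addSubgroupOf (cocycles 𝒜 𝒰 n)

noncomputable instance (𝒜 : SimpAbPresheaf M) (𝒰 : Cover M) (n : ℕ) :
    AddCommGroup (coverH 𝒜 𝒰 n) := by
  unfold coverH; infer_instance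

/-- A refinement `θ : 𝒱 → 𝒰` between covers. -/
structure Refines (𝒱 𝒰 : Cover M) : Type u where
  θ : ∀ n, 𝒱.idx n → 𝒰.idx n
  sub : ∀ (n : ℕ) (j : 𝒱.idx n), 𝒱.U n j ≤ 𝒰.U n (θ n j)

def Refines.lambdaMap {𝒱 𝒰 : Cover M} (ρ : Refines 𝒱 𝒰) {n : ℕ} (l : 𝒱.Lambda n) :
    𝒰.Lambda n :=
  fun k f => ρ.θ k (l k f)

lemma Refines.lambdaOpen_le {𝒱 𝒰 : Cover M} (ρ : Refines 𝒱 𝒰) {n : ℕ} (l : 𝒱.Lambda n) :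
    𝒱.lambdaOpen l ≤ 𝒰.lambdaOpen (ρ.lambdaMap l) :=
  fun x hx k f => ρ.sub k (l k f) (hx k f)

/-- The restriction map `θ^* : C^n(𝒰;𝒜) → C^n(𝒱;𝒜)` induced by a refinement. -/
def Refines.cochainMap {𝒱 𝒰 : Cover M} (ρ : Refines 𝒱 𝒰) (𝒜 : SimpAbPresheaf M) (n : ℕ) :
    Cochain 𝒜 𝒰 n →+ Cochain 𝒜 𝒱 n where
  toFun c := fun l => (𝒜.Sh n).res (ρ.lambdaOpen_le l) (c (ρ.lambdaMap l))
  map_zero' := by funext l; simp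
  map_add' c₁ c₂ := by funext l; simp

lemma Refines.cochainMap_coboundary {𝒱 𝒰 : Cover M} (ρ : Refines 𝒱 𝒰)
    (𝒜 : SimpAbPresheaf M) (n : ℕ) (c : Cochain 𝒜 𝒰 n) :
    ρ.cochainMap 𝒜 (n + 1) (coboundary 𝒜 𝒰 n c)
      = coboundary 𝒜 𝒱 n (ρ.cochainMap 𝒜 n c) := by
  funext l
  show (𝒜.Sh (n + 1)).res _ (∑ k : Fin (n + 2), _) = ∑ k : Fin (n + 2), _
  rw [map_sum]
  refine Finset.sum_congr rfl fun k _ => ?_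
  rw [map_zsmul]
  congr 1
  exact 𝒜.cmap_res (deltaEps n k) (ρ.lambdaOpen_le l)
    (ρ.lambdaOpen_le (𝒱.epsPull k l)) _ _ _

lemma Refines.cochainMap_mem_cocycles {𝒱 𝒰 : Cover M} (ρ : Refines 𝒱 𝒰)
    (𝒜 : SimpAbPresheaf M) (n : ℕ) {c : Cochain 𝒜 𝒰 n} (hc : c ∈ cocycles 𝒜 𝒰 n) :
    ρ.cochainMap 𝒜 n c ∈ cocycles 𝒜 𝒱 n := by
  have h := ρ.cochainMap_coboundary 𝒜 n c
  simp only [cocycles, AddMonoidHom.mem_ker] at hc ⊢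
  rw [← h, hc, map_zero]

lemma Refines.cochainMap_mem_boundaries {𝒱 𝒰 : Cover M} (ρ : Refines 𝒱 𝒰)
    (𝒜 : SimpAbPresheaf M) (n : ℕ) {c : Cochain 𝒜 𝒰 n} (hc : c ∈ boundaries 𝒜 𝒰 n) :
    ρ.cochainMap 𝒜 n c ∈ boundaries 𝒜 𝒱 n := by
  cases n with
  | zero =>
      simp only [boundaries, AddSubgroup.mem_bot] at hc ⊢
      rw [hc, map_zero]
  | succ n =>
      simp only [boundaries, AddMonoidHom.mem_range] at hc ⊢
      obtain ⟨b, rfl⟩ := hc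
      exact ⟨ρ.cochainMap 𝒜 n b, (ρ.cochainMap_coboundary 𝒜 n b).symm⟩

/-- The map induced by a refinement on cocycles. -/
def Refines.cocycleMap {𝒱 𝒰 : Cover M} (ρ : Refines 𝒱 𝒰) (𝒜 : SimpAbPresheaf M) (n : ℕ) :
    cocycles 𝒜 𝒰 n →+ cocycles 𝒜 𝒱 n :=
  ((ρ.cochainMap 𝒜 n).comp (cocycles 𝒜 𝒰 n).subtype).codRestrict _
    (fun c => ρ.cochainMap_mem_cocycles 𝒜 n c.2)

/-- The map `H^n(𝒰;𝒜) → H^n(𝒱;𝒜)` induced by a refinement. -/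
noncomputable def Refines.Hmap {𝒱 𝒰 : Cover M} (ρ : Refines 𝒱 𝒰) (𝒜 : SimpAbPresheaf M)
    (n : ℕ) : coverH 𝒜 𝒰 n →+ coverH 𝒜 𝒱 n :=
  QuotientAddGroup.map _ _ (ρ.cocycleMap 𝒜 n) (by
    intro z hz
    simp only [AddSubgroup.mem_addSubgroupOf, AddSubgroup.mem_comap] at hz ⊢
    exact ρ.cochainMap_mem_boundaries 𝒜 n hz)

lemma Refines.Hmap_mk {𝒱 𝒰 : Cover M} (ρ : Refines 𝒱 𝒰) (𝒜 : SimpAbPresheaf M)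
    (n : ℕ) (z : cocycles 𝒜 𝒰 n) :
    ρ.Hmap 𝒜 n (QuotientAddGroup.mk' _ z)
      = QuotientAddGroup.mk' _ (ρ.cocycleMap 𝒜 n z) :=
  QuotientAddGroup.map_mk' _ _ _ _ _

end GroupoidCohomology

namespace GroupoidCohomology

open TopologicalSpace

variable {M : SimplicialSpace.{u}}

section Stalks

variable {X : Type u} [TopologicalSpace X]

/-- The directed set of open neighbourhoods of a point. -/
def Nbhds (X : Type u) [TopologicalSpace X] (x : X) : Type u := {U : Opens X // x ∈ U}

instance (x : X) : Preorder (Nbhds X x) where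
  le U V := V.1 ≤ U.1
  le_refl U := fun z hz => hz
  le_trans U V W h₁ h₂ := fun z hz => h₁ (h₂ hz)

lemma Nbhds.le_opens {x : X} {U V : Nbhds X x} (h : U ≤ V) : V.1 ≤ U.1 :=
  fun z hz => h hz

lemma Nbhds.opens_le {x : X} {U V : Nbhds X x} (h : V.1 ≤ U.1) : U ≤ V :=
  fun z hz => h hz

instance (x : X) : Nonempty (Nbhds X x) := ⟨⟨⊤, trivial⟩⟩

instance (x : X) : IsDirected (Nbhds X x) (· ≤ ·) where
  directed U V :=
    ⟨⟨U.1 ⊓ V.1, ⟨U.2, V.2⟩⟩,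
      Nbhds.opens_le inf_le_left, Nbhds.opens_le inf_le_right⟩

/-- The stalk of an abelian presheaf at a point: the direct limit of the sections over
the open neighbourhoods of the point. -/
noncomputable def Stalk (F : AbPresheaf X) (x : X) : Type u :=
  @AddCommGroup.DirectLimit (Nbhds X x) _ (fun U => F.sec U.1) _ (Classical.decEq _)
    (fun _ _ h => F.res (Nbhds.le_opens h))

noncomputable instance (F : AbPresheaf X) (x : X) : AddCommGroup (Stalk F x) := by
  unfold Stalk; infer_instance

instance stalkDirSys (F : AbPresheaf X) (x : X) :
    DirectedSystem (fun U : Nbhds X x => F.sec U.1)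
      (fun _ _ h => (F.res (Nbhds.le_opens h) : F.sec _ →+ F.sec _)) where
  map_self := by intro U s; exact F.res_rfl s
  map_map := by intro U V W h₁ h₂ s; exact F.res_res _ _ s

/-- The germ of a section at a point. -/
noncomputable def germ (F : AbPresheaf X) {x : X} (U : Opens X) (hx : x ∈ U) :
    F.sec U →+ Stalk F x :=
  @AddCommGroup.DirectLimit.of (Nbhds X x) _ (fun U => F.sec U.1) _
    (fun _ _ h => F.res (Nbhds.le_opens h)) (Classical.decEq _) ⟨U, hx⟩

lemma germ_res (F : AbPresheaf X) {x : X} {U V : Opens X} (h : V ≤ U) (hx : x ∈ V)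
    (hx' : x ∈ U) (s : F.sec U) :
    germ F V hx (F.res h s) = germ F U hx' s :=
  @AddCommGroup.DirectLimit.of_f (Nbhds X x) _ (fun U => F.sec U.1) _
    (fun _ _ h => F.res (Nbhds.le_opens h)) (Classical.decEq _) ⟨U, hx'⟩ ⟨V, hx⟩
    (Nbhds.opens_le h) s

/-- Transport of stalks along an equality of points. -/
noncomputable def stalkCast (F : AbPresheaf X) {x y : X} (e : x = y) :
    Stalk F x →+ Stalk F y := by
  subst e; exact AddMonoidHom.id _

lemma stalkCast_germ (F : AbPresheaf X) {x y : X} (e : x = y) (U : Opens X)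
    (hx : x ∈ U) (s : F.sec U) :
    stalkCast F e (germ F U hx s) = germ F U (e ▸ hx) s := by
  subst e; rfl

lemma stalkCast_eval {W : Set X} {T : AbPresheaf X}
    (φ : ∀ z : W, Stalk T z.1) {y x : X} (e : y = x) (hy : y ∈ W) :
    stalkCast T e (φ ⟨y, hy⟩) = φ ⟨x, e ▸ hy⟩ := by
  subst e; rfl

end Stalks

/-- The preimage of an open set along a structure map of a simplicial space. -/
def preOpen (M : SimplicialSpace.{u}) {k n : ℕ} (f : DeltaHom k n) (U : Opens (M.X k)) :
    Opens (M.X n) :=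
  ⟨M.map f ⁻¹' U, U.isOpen.preimage (M.map_continuous f)⟩

lemma mem_preOpen {k n : ℕ} {f : DeltaHom k n} {U : Opens (M.X k)} {x : M.X n} :
    x ∈ preOpen M f U ↔ M.map f x ∈ U := Iff.rfl

/-- The map induced on stalks by the structure maps of a simplicial sheaf:
`Stalk 𝒜^k (f̃ x) →+ Stalk 𝒜^n x`. -/
noncomputable def stalkMap (𝒜 : SimpAbPresheaf M) {k n : ℕ} (f : DeltaHom k n)
    (x : M.X n) : Stalk (𝒜.Sh k) (M.map f x) →+ Stalk (𝒜.Sh n) x :=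
  @AddCommGroup.DirectLimit.lift (Nbhds (M.X k) (M.map f x)) _
    (fun U => (𝒜.Sh k).sec U.1) _ (fun _ _ h => (𝒜.Sh k).res (Nbhds.le_opens h))
    (Classical.decEq _) _ _
    (fun W => (germ (𝒜.Sh n) (preOpen M f W.1) (W.2 : M.map f x ∈ W.1)).comp
      (𝒜.cmap f (fun _ hz => hz)))
    (by
      intro W W' hW s
      have hW' : W'.1 ≤ W.1 := Nbhds.le_opens hW
      have hpre : preOpen M f W'.1 ≤ preOpen M f W.1 := fun z hz => hW' hz
      show germ (𝒜.Sh n) (preOpen M f W'.1) _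
          (𝒜.cmap f (fun _ hz => hz) ((𝒜.Sh k).res hW' s)) = _
      rw [← 𝒜.cmap_res f hpre hW' (fun _ hz => hz) (fun _ hz => hz) s]
      exact germ_res (𝒜.Sh n) hpre _ _ _)

lemma stalkMap_germ (𝒜 : SimpAbPresheaf M) {k n : ℕ} (f : DeltaHom k n) (x : M.X n)
    (W : Opens (M.X k)) (hW : M.map f x ∈ W) (s : (𝒜.Sh k).sec W) :
    stalkMap 𝒜 f x (germ (𝒜.Sh k) W hW s)
      = germ (𝒜.Sh n) (preOpen M f W) hW (𝒜.cmap f (fun _ hz => hz) s) := by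
  letI := Classical.decEq (Nbhds (M.X k) (M.map f x))
  exact AddCommGroup.DirectLimit.lift_of _ _ _ _ _

lemma stalkMap_id (𝒜 : SimpAbPresheaf M) {n : ℕ} (x : M.X n)
    (ξ : Stalk (𝒜.Sh n) (M.map OrderHom.id x)) :
    stalkMap 𝒜 OrderHom.id x ξ = stalkCast (𝒜.Sh n) (M.map_id x) ξ := by
  induction ξ using AddCommGroup.DirectLimit.induction_on with
  | ih W s =>
    obtain ⟨W, hW⟩ := W
    show stalkMap 𝒜 OrderHom.id x (germ (𝒜.Sh n) W hW s)
        = stalkCast (𝒜.Sh n) (M.map_id x) (germ (𝒜.Sh n) W hW s)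
    rw [stalkMap_germ, stalkCast_germ]
    exact (congrArg (germ (𝒜.Sh n) (preOpen M OrderHom.id W) hW) (𝒜.cmap_id _ s)).trans
      (germ_res (𝒜.Sh n) _ _ _ s)

lemma stalkMap_comp (𝒜 : SimpAbPresheaf M) {l k n : ℕ} (g : DeltaHom l k)
    (f : DeltaHom k n) (x : M.X n)
    (ξ : Stalk (𝒜.Sh l) (M.map g (M.map f x))) :
    stalkMap 𝒜 f x (stalkMap 𝒜 g (M.map f x) ξ)
      = stalkMap 𝒜 (f.comp g) x (stalkCast (𝒜.Sh l) (M.map_comp g f x) ξ) := by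
  induction ξ using AddCommGroup.DirectLimit.induction_on with
  | ih W s =>
    obtain ⟨W, hW⟩ := W
    show stalkMap 𝒜 f x (stalkMap 𝒜 g (M.map f x) (germ (𝒜.Sh l) W hW s))
        = stalkMap 𝒜 (f.comp g) x (stalkCast (𝒜.Sh l) (M.map_comp g f x)
            (germ (𝒜.Sh l) W hW s))
    refine (congrArg (stalkMap 𝒜 f x) (stalkMap_germ 𝒜 g (M.map f x) W hW s)).trans ?_
    refine (stalkMap_germ 𝒜 f x (preOpen M g W) hW _).trans ?_
    refine Eq.trans ?_ (congrArg (stalkMap 𝒜 (f.comp g) x)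
      (stalkCast_germ (𝒜.Sh l) (M.map_comp g f x) W hW s)).symm
    refine Eq.trans ?_ (stalkMap_germ 𝒜 (f.comp g) x W
      (by rw [← M.map_comp g f x]; exact hW) s).symm
    -- the two germs live over the (equal) opens `preOpen f (preOpen g W)` and
    -- `preOpen (f.comp g) W`; compare them after restricting.
    have hle : preOpen M f (preOpen M g W) ≤ preOpen M (f.comp g) W := by
      intro z hz
      show M.map (f.comp g) z ∈ W
      rw [← M.map_comp g f z]
      exact hz
    have key : 𝒜.cmap f (U := preOpen M f (preOpen M g W)) (V := preOpen M g W)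
        (fun _ hz => hz) (𝒜.cmap g (V := W) (fun _ hz => hz) s)
        = (𝒜.Sh n).res hle
            (𝒜.cmap (f.comp g) (U := preOpen M (f.comp g) W) (fun _ hz => hz) s) := by
      exact (𝒜.cmap_comp g f (U := preOpen M f (preOpen M g W)) (V := preOpen M g W) (W := W)
        (fun _ hz => hz) (fun _ hz => hz) s).trans
        ((congrArg (𝒜.cmap (f.comp g) (U := preOpen M f (preOpen M g W)) (V := W)
          (fun z hz => by rw [← M.map_comp g f z]; exact hz)) ((𝒜.Sh l).res_rfl s).symm).trans
          (𝒜.cmap_res (f.comp g) hle le_rfl (fun _ hz => hz)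
            (fun z hz => by rw [← M.map_comp g f z]; exact hz) s).symm)
    exact (congrArg (germ (𝒜.Sh n) (preOpen M f (preOpen M g W)) hW) key).trans
      (germ_res (𝒜.Sh n) hle hW _ _)

lemma stalkMap_congr_hom (𝒜 : SimpAbPresheaf M) {k n : ℕ} {g₁ g₂ : DeltaHom k n}
    (e : g₁ = g₂) (x : M.X n) (ep : M.map g₁ x = M.map g₂ x)
    (ξ : Stalk (𝒜.Sh k) (M.map g₁ x)) :
    stalkMap 𝒜 g₁ x ξ = stalkMap 𝒜 g₂ x (stalkCast (𝒜.Sh k) ep ξ) := by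
  subst e; rfl

end GroupoidCohomology

namespace GroupoidCohomology

open TopologicalSpace

variable {M : SimplicialSpace.{u}}

/-- `f' : [k+1] → [n+1]`, the morphism with `f'(0) = 0` and `ε₀ ∘ f = f' ∘ ε₀`. -/
def primeHom {k n : ℕ} (f : DeltaHom k n) : DeltaHom (k + 1) (n + 1) where
  toFun := Fin.cases 0 (fun i => (f i).succ)
  monotone' := by
    refine Fin.cases ?_ ?_
    · intro b _
      simp only [Fin.cases_zero]
      exact Fin.zero_le _
    · intro i
      refine Fin.cases ?_ ?_
      · intro h
        exact absurd (Fin.le_zero_iff.mp h) (Fin.succ_ne_zero i)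
      · intro j h
        simp only [Fin.cases_succ]
        have hij : i ≤ j := by
          rw [Fin.le_def] at h ⊢
          simpa using h
        exact Fin.succ_le_succ_iff.mpr (f.monotone hij)

lemma primeHom_id (n : ℕ) : primeHom (OrderHom.id : DeltaHom n n) = OrderHom.id := by
  ext j
  induction j using Fin.cases with
  | zero => simp [primeHom]
  | succ i => simp [primeHom]

lemma primeHom_comp {l k n : ℕ} (g : DeltaHom l k) (f : DeltaHom k n) :
    primeHom (f.comp g) = (primeHom f).comp (primeHom g) := by
  ext j
  induction j using Fin.cases with
  | zero => simp [primeHom] <;> rfl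
  | succ i => simp [primeHom] <;> rfl

lemma primeHom_eps {k n : ℕ} (f : DeltaHom k n) :
    (deltaEps n 0).comp f = (primeHom f).comp (deltaEps k 0) := by
  ext i
  simp [primeHom, deltaEps, Fin.zero_succAbove] <;> rfl

/-- `ε̃₀⁻¹(U)`. -/
def epsPreOpen {n : ℕ} (U : Opens (M.X n)) : Opens (M.X (n + 1)) :=
  preOpen M (deltaEps n 0) U

lemma epsPre_mono {n : ℕ} {U V : Opens (M.X n)} (h : U ≤ V) :
    epsPreOpen (M := M) U ≤ epsPreOpen V :=
  fun _ hz => h hz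

lemma mem_epsPre_of {k n : ℕ} (f : DeltaHom k n) {U : Opens (M.X n)} {V : Opens (M.X k)}
    (h : ∀ x ∈ U, M.map f x ∈ V) {x : M.X (n + 1)} (hx : x ∈ epsPreOpen U) :
    M.map (primeHom f) x ∈ epsPreOpen V := by
  show M.map (deltaEps k 0) (M.map (primeHom f) x) ∈ V
  rw [M.map_comp (deltaEps k 0) (primeHom f) x, ← primeHom_eps f,
    ← M.map_comp f (deltaEps n 0) x]
  exact h _ hx

/-- The sections of `I(𝒜)^n` over `U`: arbitrary (not necessarily continuous) functions
`φ` on `ε̃₀⁻¹(U) ⊆ M_{n+1}` with `φ(x)` in the stalk `𝒜^{n+1}_x`. -/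
abbrev IAsec (𝒜 : SimpAbPresheaf M) (n : ℕ) (U : Opens (M.X n)) : Type u :=
  ∀ x : (epsPreOpen U : Set (M.X (n + 1))), Stalk (𝒜.Sh (n + 1)) x.1

/-- The presheaf `I(𝒜)^n` on `M.X n`. -/
noncomputable def IApresheaf (𝒜 : SimpAbPresheaf M) (n : ℕ) : AbPresheaf (M.X n) where
  sec := IAsec 𝒜 n
  grp := fun _ => inferInstance
  res {U V} h :=
    { toFun := fun φ x => φ ⟨x.1, epsPre_mono h x.2⟩
      map_zero' := rfl
      map_add' := fun _ _ => rfl }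
  res_rfl _ := rfl
  res_res _ _ _ := rfl

/-- The simplicial sheaf `I(𝒜)^•` (Section 6 of the paper). -/
noncomputable def IAfun (𝒜 : SimpAbPresheaf M) : SimpAbPresheaf M where
  Sh := IApresheaf 𝒜
  cmap {k n} f {U V} h :=
    { toFun := fun φ x =>
        stalkMap 𝒜 (primeHom f) x.1
          (φ ⟨M.map (primeHom f) x.1, mem_epsPre_of f h x.2⟩)
      map_zero' := by
        funext x
        show stalkMap 𝒜 (primeHom f) x.1 0 = 0
        exact map_zero _
      map_add' := fun φ ψ => by
        funext x
        show stalkMap 𝒜 (primeHom f) x.1 (_ + _) = _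
        rw [map_add]
        rfl }
  cmap_res {k n} f U U' V V' hU hV h h' sv := by
    funext x
    rfl
  cmap_id {n} {U V} h sv := by
    funext x
    change IAsec 𝒜 n V at sv
    show stalkMap 𝒜 (primeHom OrderHom.id) x.1 _ = _
    have ep : M.map (primeHom (OrderHom.id : DeltaHom n n)) x.1
        = M.map OrderHom.id x.1 := by
      rw [primeHom_id]
    rw [stalkMap_congr_hom 𝒜 (primeHom_id n) x.1 ep, stalkCast_eval, stalkMap_id,
      stalkCast_eval]
    rfl
  cmap_comp {l k n} g f {U V W} hf hg sw := by
    funext x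
    change IAsec 𝒜 l W at sw
    show stalkMap 𝒜 (primeHom f) x.1
        (stalkMap 𝒜 (primeHom g) (M.map (primeHom f) x.1)
          (sw ⟨M.map (primeHom g) (M.map (primeHom f) x.1), _⟩)) = _
    have e : (primeHom f).comp (primeHom g) = primeHom (f.comp g) :=
      (primeHom_comp g f).symm
    have ep : M.map ((primeHom f).comp (primeHom g)) x.1
        = M.map (primeHom (f.comp g)) x.1 := by rw [e]
    rw [stalkMap_comp 𝒜 (primeHom g) (primeHom f) x.1, stalkCast_eval,
      stalkMap_congr_hom 𝒜 e x.1 ep, stalkCast_eval]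
    rfl

end GroupoidCohomology

/-!
Sections of `I(𝒜)` are arbitrary families of germs, so cochains can be handled pointwise and
nothing has to be glued; what matters is that `I(𝒜)^n` lives on `M_{n+1}`, which carries the
extra degeneracy `η₀`. For `λ ∈ Λ_m` and `x ∈ ε̃₀⁻¹(U_λ)`, extend `λ` to `λ' ∈ Λ_{m+1}` with
`ε̃₀ λ' = λ` and `x ∈ U_{λ'}` (maps avoiding `0` factor through `ε₀` and keep their index, maps
hitting `0` get any member of the cover through the image of `x`), and put
`(Hc)_λ(x) = η₀^*(c_{λ'}(η̃₀ x))`. In `(H d c)_λ(x)` the `0`-th face term is `c_λ(x)` since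
`η₀ ε₁ = id`, and the `(k+1)`-st cancels the `k`-th term of `(d H c)_λ(x)` since
`η₀ ε_{k+2} = ε_{k+1} η₀` and `ε̃_{k+1} λ'` is the extension of `ε̃_k λ`. So `dH + Hd = id`.
-/

namespace GroupoidCohomology

open TopologicalSpace

variable {M : SimplicialSpace.{u}}

section Cosimplicial

@[simp] lemma deltaEps_val (n : ℕ) (i : Fin (n + 2)) (j : Fin (n + 1)) :
    ((deltaEps n i j : Fin (n + 2)) : ℕ) = if (j : ℕ) < i then (j : ℕ) else (j : ℕ) + 1 := by
  show ((i.succAbove j : Fin (n + 2)) : ℕ) = _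
  rcases lt_or_ge (j : ℕ) i with h | h
  · rw [Fin.succAbove_of_castSucc_lt _ _ (by simpa [Fin.lt_def] using h)]
    simp [h]
  · rw [Fin.succAbove_of_le_castSucc _ _ (by simpa [Fin.le_def] using h)]
    simp [Nat.not_lt.mpr h]

lemma deltaEps_zero_apply (n : ℕ) (j : Fin (n + 1)) : deltaEps n 0 j = j.succ :=
  Fin.zero_succAbove j

/-- The degeneracy `η₀ : [n+1] → [n]`. -/
def eta0 (n : ℕ) : DeltaHom (n + 1) n where
  toFun j := ⟨j - 1, by omega⟩
  monotone' _ _ hab := Fin.mk_le_mk.mpr (Nat.sub_le_sub_right hab 1)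

@[simp] lemma eta0_val (n : ℕ) (j : Fin (n + 2)) : ((eta0 n j : Fin (n + 1)) : ℕ) = j - 1 :=
  rfl

lemma eta0_comp_deltaEps_zero (n : ℕ) :
    (eta0 (n + 1)).comp (deltaEps (n + 1) 0) = OrderHom.id := by
  ext j
  simp

lemma eta0_comp_deltaEps_one (n : ℕ) :
    (eta0 (n + 1)).comp (deltaEps (n + 1) 1) = OrderHom.id := by
  ext j
  simp only [OrderHom.comp_coe, Function.comp_apply, OrderHom.id_coe, id_eq, eta0_val,
    deltaEps_val]
  split_ifs with h
  · simp_all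
  · omega

lemma eta0_comp_deltaEps_succ_succ (n : ℕ) (k : Fin (n + 2)) :
    (eta0 (n + 2)).comp (deltaEps (n + 2) k.succ.succ)
      = (deltaEps (n + 1) k.succ).comp (eta0 (n + 1)) := by
  ext j
  simp only [OrderHom.comp_coe, Function.comp_apply, eta0_val, deltaEps_val, Fin.val_succ,
    Order.lt_add_one_iff, tsub_le_iff_right]
  split_ifs <;> omega

lemma deltaEps_zero_comp_deltaEps (n : ℕ) (k : Fin (n + 2)) :
    (deltaEps (n + 1) 0).comp (deltaEps n k) = (deltaEps (n + 1) k.succ).comp (deltaEps n 0) := by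
  ext j
  simp only [OrderHom.comp_coe, Function.comp_apply, deltaEps_val, Fin.coe_ofNat_eq_mod,
    Nat.zero_mod, not_lt_zero, ↓reduceIte, Fin.val_succ, Order.lt_add_one_iff,
    Order.add_one_le_iff]
  split_ifs <;> omega

lemma primeHom_deltaEps (n : ℕ) (i : Fin (n + 2)) :
    primeHom (deltaEps n i) = deltaEps (n + 1) i.succ := by
  ext j
  induction j using Fin.cases with
  | zero => exact congrArg Fin.val (Fin.succAbove_ne_zero_zero (Fin.succ_ne_zero i)).symm
  | succ t => exact congrArg Fin.val (Fin.succ_succAbove_succ i t).symm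

end Cosimplicial

namespace StrictHom

variable {r n : ℕ} (f : StrictHom r (n + 1))

lemma apply_ne_zero (h : f.1 0 ≠ 0) (i : Fin (r + 1)) : f.1 i ≠ 0 :=
  fun h0 => h (Fin.le_zero_iff.mp (h0 ▸ f.1.monotone (Fin.zero_le i)))

def lower (h : f.1 0 ≠ 0) : StrictHom r n :=
  have hmono : StrictMono fun i => (f.1 i).pred (f.apply_ne_zero h i) :=
    fun _ _ hab => Fin.pred_lt_pred_iff.mpr (f.2 hab)
  ⟨⟨_, hmono.monotone⟩, hmono⟩

lemma deltaEps_zero_comp_lower (h : f.1 0 ≠ 0) : (deltaEps n 0).comp (f.lower h).1 = f.1 := by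
  ext i
  rw [OrderHom.comp_coe, Function.comp_apply, deltaEps_zero_apply]
  exact congrArg Fin.val (Fin.succ_pred (f.1 i) (f.apply_ne_zero h i))

lemma lower_eq (h : f.1 0 ≠ 0) {g : DeltaHom r n} (hg : (deltaEps n 0).comp g = f.1) :
    (f.lower h).1 = g := by
  ext i
  have hi := congrArg (· i) ((f.deltaEps_zero_comp_lower h).trans hg.symm)
  simp only [OrderHom.comp_coe, Function.comp_apply, deltaEps_zero_apply] at hi
  exact congrArg Fin.val (Fin.succ_injective _ hi)

end StrictHom

section ExtendLambda

noncomputable def Cover.pick (𝒰 : Cover M) (k : ℕ) (z : M.X k) : 𝒰.idx k :=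
  (𝒰.covers k z).choose

lemma Cover.mem_pick (𝒰 : Cover M) (k : ℕ) (z : M.X k) : z ∈ 𝒰.U k (𝒰.pick k z) :=
  (𝒰.covers k z).choose_spec

noncomputable def Cover.extendLambda (𝒰 : Cover M) {n : ℕ} (l : 𝒰.Lambda n)
    (x : M.X (n + 1)) : 𝒰.Lambda (n + 1) :=
  fun r f => if h : f.1 0 = 0 then 𝒰.pick r (M.map f.1 x) else l r (f.lower h)

variable (𝒰 : Cover M) {n : ℕ}

lemma Cover.mem_lambdaOpen_extendLambda (l : 𝒰.Lambda n) (x : M.X (n + 1))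
    (hx : M.map (deltaEps n 0) x ∈ 𝒰.lambdaOpen l) :
    x ∈ 𝒰.lambdaOpen (𝒰.extendLambda l x) := by
  intro r f
  simp only [Cover.extendLambda]
  split_ifs with h
  · exact 𝒰.mem_pick r _
  · rw [← f.deltaEps_zero_comp_lower h, ← M.map_comp]
    exact hx r (f.lower h)

lemma Cover.epsPull_zero_extendLambda (l : 𝒰.Lambda n) (x : M.X (n + 1)) :
    𝒰.epsPull 0 (𝒰.extendLambda l x) = l := by
  funext r f
  have h : ((deltaEps n 0).comp f.1) 0 ≠ 0 := by
    simpa only [OrderHom.comp_coe, Function.comp_apply, deltaEps_zero_apply]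
      using Fin.succ_ne_zero _
  simp only [Cover.epsPull, Cover.extendLambda, dif_neg h]
  exact congrArg (l r) (Subtype.ext (StrictHom.lower_eq _ h rfl))

lemma Cover.epsPull_succ_extendLambda (l : 𝒰.Lambda (n + 1)) (x : M.X (n + 2))
    (k : Fin (n + 2)) :
    𝒰.epsPull k.succ (𝒰.extendLambda l x)
      = 𝒰.extendLambda (𝒰.epsPull k l) (M.map (primeHom (deltaEps n k)) x) := by
  funext r f
  have hzero : ((deltaEps (n + 1) k.succ).comp f.1) 0 = 0 ↔ f.1 0 = 0 :=
    Fin.succAbove_eq_zero_iff (Fin.succ_ne_zero k)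
  simp only [Cover.epsPull, Cover.extendLambda]
  by_cases h : f.1 0 = 0
  · rw [dif_pos (hzero.mpr h), dif_pos h, M.map_comp, primeHom_deltaEps]
  · rw [dif_neg (mt hzero.mp h), dif_neg h]
    refine congrArg (l r) (Subtype.ext (StrictHom.lower_eq _ _ ?_))
    rw [← OrderHom.comp_assoc, deltaEps_zero_comp_deltaEps, OrderHom.comp_assoc,
      f.deltaEps_zero_comp_lower h]

end ExtendLambda

lemma alternating_sum_add_alternating_sum_succ {A : Type*} [AddCommGroup A] {n : ℕ}
    (T : Fin n → A) (S : Fin (n + 1) → A) (hS : ∀ k, S k.succ = T k) :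
    (∑ k : Fin n, ((-1 : ℤ) ^ (k : ℕ)) • T k) + ∑ j : Fin (n + 1), ((-1 : ℤ) ^ (j : ℕ)) • S j
      = S 0 := by
  simp only [Fin.sum_univ_succ, hS, Fin.val_zero, pow_zero, one_smul, Fin.val_succ, pow_succ,
    mul_neg_one, neg_smul, Finset.sum_neg_distrib]
  abel

lemma subsingleton_coverH_succ {𝒜 : SimpAbPresheaf M} {𝒰 : Cover M} {m : ℕ}
    (h₀ : Cochain 𝒜 𝒰 (m + 1) → Cochain 𝒜 𝒰 m) (h₁ : Cochain 𝒜 𝒰 (m + 2) →+ Cochain 𝒜 𝒰 (m + 1))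
    (hh : ∀ c, coboundary 𝒜 𝒰 m (h₀ c) + h₁ (coboundary 𝒜 𝒰 (m + 1) c) = c) :
    Subsingleton (coverH 𝒜 𝒰 (m + 1)) := by
  refine subsingleton_of_forall_eq 0 fun ξ => ?_
  obtain ⟨z, rfl⟩ := QuotientAddGroup.mk'_surjective _ ξ
  refine (QuotientAddGroup.eq_zero_iff z).mpr (AddSubgroup.mem_addSubgroupOf.mpr ⟨h₀ z, ?_⟩)
  have hz : coboundary 𝒜 𝒰 (m + 1) z = 0 := z.2
  simpa [hz] using hh z

section Homotopy

variable (𝒜 : SimpAbPresheaf M) (𝒰 : Cover M)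

lemma map_deltaEps_zero_map_eta0 {n : ℕ} (x : M.X (n + 1)) :
    M.map (deltaEps (n + 1) 0) (M.map (eta0 (n + 1)) x) = x := by
  rw [M.map_comp, eta0_comp_deltaEps_zero, M.map_id]

lemma map_eta0_mem_epsPreOpen {n : ℕ} (l : 𝒰.Lambda n) (x : M.X (n + 1))
    (hx : x ∈ epsPreOpen (𝒰.lambdaOpen l)) :
    M.map (eta0 (n + 1)) x ∈ epsPreOpen (𝒰.lambdaOpen (𝒰.extendLambda l x)) := by
  show M.map (deltaEps (n + 1) 0) (M.map (eta0 (n + 1)) x) ∈ 𝒰.lambdaOpen (𝒰.extendLambda l x)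
  rw [map_deltaEps_zero_map_eta0]
  exact 𝒰.mem_lambdaOpen_extendLambda l x hx

lemma stalkMap_stalkMap_apply {l k n : ℕ} {W : Set (M.X l)}
    (φ : ∀ z : W, Stalk (𝒜.Sh l) z.1) (g : DeltaHom l k) (f : DeltaHom k n)
    {h : DeltaHom l n} (e : f.comp g = h) (x : M.X n) (hx : M.map g (M.map f x) ∈ W)
    (hx' : M.map h x ∈ W) :
    stalkMap 𝒜 f x (stalkMap 𝒜 g (M.map f x) (φ ⟨_, hx⟩)) = stalkMap 𝒜 h x (φ ⟨_, hx'⟩) := by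
  subst e
  rw [stalkMap_comp, stalkCast_eval]

lemma stalkMap_id_apply {n : ℕ} {W : Set (M.X n)} (φ : ∀ z : W, Stalk (𝒜.Sh n) z.1)
    (x : M.X n) (hx : M.map OrderHom.id x ∈ W) (hx' : x ∈ W) :
    stalkMap 𝒜 OrderHom.id x (φ ⟨_, hx⟩) = φ ⟨x, hx'⟩ := by
  rw [stalkMap_id, stalkCast_eval]

lemma Cochain.apply_congr_index {n : ℕ} (c : Cochain (IAfun 𝒜) 𝒰 n) {μ ν : 𝒰.Lambda n}
    (e : μ = ν) (w : M.X (n + 1)) (hμ : w ∈ epsPreOpen (𝒰.lambdaOpen μ))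
    (hν : w ∈ epsPreOpen (𝒰.lambdaOpen ν)) :
    c μ ⟨w, hμ⟩ = c ν ⟨w, hν⟩ := by
  subst e; rfl

lemma coboundary_IAfun_apply {n : ℕ} (c : Cochain (IAfun 𝒜) 𝒰 n) (l : 𝒰.Lambda (n + 1))
    (z : M.X (n + 2)) (hz : z ∈ epsPreOpen (𝒰.lambdaOpen l)) :
    coboundary (IAfun 𝒜) 𝒰 n c l ⟨z, hz⟩
      = ∑ k : Fin (n + 2), ((-1 : ℤ) ^ (k : ℕ)) •
          stalkMap 𝒜 (primeHom (deltaEps n k)) z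
            (c (𝒰.epsPull k l) ⟨M.map (primeHom (deltaEps n k)) z,
              mem_epsPre_of (deltaEps n k) (fun _ hw => 𝒰.mem_epsPull k l hw) hz⟩) := by
  show (∑ k : Fin (n + 2), _ : IAsec 𝒜 (n + 1) _) ⟨z, hz⟩ = _
  erw [Finset.sum_apply]
  rfl

noncomputable def IAhomotopy (n : ℕ) :
    Cochain (IAfun 𝒜) 𝒰 (n + 1) →+ Cochain (IAfun 𝒜) 𝒰 n where
  toFun c l x := stalkMap 𝒜 (eta0 (n + 1)) x.1
    (c (𝒰.extendLambda l x.1) ⟨_, map_eta0_mem_epsPreOpen 𝒰 l x.1 x.2⟩)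
  map_zero' := by
    funext l x
    exact map_zero (stalkMap 𝒜 (eta0 (n + 1)) x.1)
  map_add' c₁ c₂ := by
    funext l x
    exact map_add (stalkMap 𝒜 (eta0 (n + 1)) x.1) _ _

variable {𝒜 𝒰} {m : ℕ} (c : Cochain (IAfun 𝒜) 𝒰 (m + 1))

lemma IAhomotopy_coboundary_term_zero (l : 𝒰.Lambda (m + 1)) (z : M.X (m + 2))
    (hz : z ∈ epsPreOpen (𝒰.lambdaOpen l)) :
    stalkMap 𝒜 (eta0 (m + 2)) z
      (stalkMap 𝒜 (primeHom (deltaEps (m + 1) 0)) (M.map (eta0 (m + 2)) z)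
        (c (𝒰.epsPull 0 (𝒰.extendLambda l z)) ⟨_,
          mem_epsPre_of (deltaEps (m + 1) 0)
            (fun _ hw => 𝒰.mem_epsPull 0 (𝒰.extendLambda l z) hw)
            (map_eta0_mem_epsPreOpen 𝒰 l z hz)⟩))
    = c l ⟨z, hz⟩ := by
  have e : (eta0 (m + 2)).comp (primeHom (deltaEps (m + 1) 0)) = OrderHom.id := by
    rw [primeHom_deltaEps, Fin.succ_zero_eq_one, eta0_comp_deltaEps_one]
  have hext := 𝒰.epsPull_zero_extendLambda l z
  rw [stalkMap_stalkMap_apply 𝒜 (c _) _ _ e z _ (by rwa [M.map_id, hext]),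
    stalkMap_id_apply 𝒜 (c _) z _ (hext ▸ hz)]
  exact Cochain.apply_congr_index 𝒜 𝒰 c hext z _ hz

lemma IAhomotopy_coboundary_term_succ (l : 𝒰.Lambda (m + 1)) (z : M.X (m + 2))
    (hz : z ∈ epsPreOpen (𝒰.lambdaOpen l)) (k : Fin (m + 2)) :
    stalkMap 𝒜 (eta0 (m + 2)) z
      (stalkMap 𝒜 (primeHom (deltaEps (m + 1) k.succ)) (M.map (eta0 (m + 2)) z)
        (c (𝒰.epsPull k.succ (𝒰.extendLambda l z)) ⟨_,
          mem_epsPre_of (deltaEps (m + 1) k.succ)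
            (fun _ hw => 𝒰.mem_epsPull k.succ (𝒰.extendLambda l z) hw)
            (map_eta0_mem_epsPreOpen 𝒰 l z hz)⟩))
    = stalkMap 𝒜 (primeHom (deltaEps m k)) z
        (IAhomotopy 𝒜 𝒰 m c (𝒰.epsPull k l) ⟨_,
          mem_epsPre_of (deltaEps m k) (fun _ hw => 𝒰.mem_epsPull k l hw) hz⟩) := by
  have e : (eta0 (m + 2)).comp (primeHom (deltaEps (m + 1) k.succ))
      = (primeHom (deltaEps m k)).comp (eta0 (m + 1)) := by
    rw [primeHom_deltaEps, primeHom_deltaEps, eta0_comp_deltaEps_succ_succ]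
  have hw : M.map ((primeHom (deltaEps m k)).comp (eta0 (m + 1))) z
      ∈ epsPreOpen (𝒰.lambdaOpen (𝒰.epsPull k.succ (𝒰.extendLambda l z))) := by
    rw [← e, ← M.map_comp]
    exact mem_epsPre_of _ (fun _ hw => 𝒰.mem_epsPull _ _ hw) (map_eta0_mem_epsPreOpen 𝒰 l z hz)
  have hext := 𝒰.epsPull_succ_extendLambda l z k
  rw [stalkMap_stalkMap_apply 𝒜 (c _) _ _ e z _ hw]
  refine Eq.trans ?_ (stalkMap_stalkMap_apply 𝒜
    (c (𝒰.extendLambda (𝒰.epsPull k l) (M.map (primeHom (deltaEps m k)) z))) _ _ rfl z _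
    (hext ▸ hw)).symm
  exact congrArg (stalkMap 𝒜 _ z) (Cochain.apply_congr_index 𝒜 𝒰 c hext _ _ _)

lemma coboundary_IAhomotopy_add_IAhomotopy_coboundary :
    coboundary (IAfun 𝒜) 𝒰 m (IAhomotopy 𝒜 𝒰 m c)
      + IAhomotopy 𝒜 𝒰 (m + 1) (coboundary (IAfun 𝒜) 𝒰 (m + 1) c) = c := by
  funext l ⟨z, hz⟩
  show _ + stalkMap 𝒜 (eta0 (m + 2)) z (coboundary (IAfun 𝒜) 𝒰 (m + 1) c _ ⟨_, _⟩) = _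
  rw [coboundary_IAfun_apply, coboundary_IAfun_apply, map_sum]
  simp only [map_zsmul]
  exact (alternating_sum_add_alternating_sum_succ _ _
    (IAhomotopy_coboundary_term_succ c l z hz)).trans
    (IAhomotopy_coboundary_term_zero c l z hz)

end Homotopy

theorem statement_12_general (M : SimplicialSpace.{u}) (𝒜 : SimpAbPresheaf M)
    (𝒰 : Cover M) :
    (∃ H : ∀ m : ℕ, Cochain (IAfun 𝒜) 𝒰 (m + 1) →+ Cochain (IAfun 𝒜) 𝒰 m,
      ∀ (m : ℕ) (c : Cochain (IAfun 𝒜) 𝒰 (m + 1)),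
        c = coboundary (IAfun 𝒜) 𝒰 m (H m c) + H (m + 1) (coboundary (IAfun 𝒜) 𝒰 (m + 1) c)) ∧
    (∀ n : ℕ, 1 ≤ n → ∀ ξ : coverH (IAfun 𝒜) 𝒰 n, ξ = 0) := by
  refine ⟨⟨IAhomotopy 𝒜 𝒰, fun _ c =>
    (coboundary_IAhomotopy_add_IAhomotopy_coboundary c).symm⟩, fun n hn ξ => ?_⟩
  obtain ⟨m, rfl⟩ := Nat.exists_eq_add_of_le' hn
  have : Subsingleton (coverH (IAfun 𝒜) 𝒰 (m + 1)) :=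
    subsingleton_coverH_succ _ _ coboundary_IAhomotopy_add_IAhomotopy_coboundary
  exact Subsingleton.elim ξ 0

/-- **Statement 12** (Lemma 6.2 of the paper). Let `𝒜^•` be an abelian sheaf on a
simplicial space `M_•` and `𝒰_•` any open cover. Then the complex `C^*(𝒰_•;I(𝒜)^•)`
is homotopically trivial; in particular `H^n(𝒰_•;I(𝒜)^•) = 0` for all `n ≥ 1`. -/
theorem statement_12 (M : SimplicialSpace.{u}) (𝒜 : SimpAbPresheaf M) (h𝒜 : 𝒜.IsSheaf)
    (𝒰 : Cover M) :
    (∃ H : ∀ m : ℕ, Cochain (IAfun 𝒜) 𝒰 (m + 1) →+ Cochain (IAfun 𝒜) 𝒰 m,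
      ∀ (m : ℕ) (c : Cochain (IAfun 𝒜) 𝒰 (m + 1)),
        c = coboundary (IAfun 𝒜) 𝒰 m (H m c) + H (m + 1) (coboundary (IAfun 𝒜) 𝒰 (m + 1) c)) ∧
    (∀ n : ℕ, 1 ≤ n → ∀ ξ : coverH (IAfun 𝒜) 𝒰 n, ξ = 0) :=
  statement_12_general M 𝒜 𝒰

end GroupoidCohomology
end

section
/- Let 𝒞_1 and 𝒞_2 be abelian categories, F : 𝒞_1 → 𝒞_2 a left exact additive functor, I : 𝒞_1 → 𝒞_1 a functor, and i : Id → I a natural transformation such that each i_A : A → I(A) is a monomorphism. Then there exists, up to natural isomorphism, at most one sequence of additive functors H^n : 𝒞_1 → 𝒞_2 (n ≥ 0), equipped with connecting morphisms, such that: 1) H^0 = F; 2) every short exact sequence 0 → A' → A → A'' → 0 in 𝒞_1 induces a natural long exact sequence 0 → H^0(A') → H^0(A) → H^0(A'') → H^1(A') → H^1(A) → ⋯; and 3) H^n(I(A)) = 0 for all objects A and all n ≥ 1. -/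
open CategoryTheory Limits

universe v₁ v₂ u₁ u₂

namespace GroupoidCohomology

variable (C : Type u₁) [Category.{v₁} C] [Abelian C]
variable (D : Type u₂) [Category.{v₂} D] [Abelian D]

/-- A (cohomological) δ-functor: a sequence of additive functors `H^n : C ⥤ D` together
with connecting morphisms `δ : H^n(A'') ⟶ H^{n+1}(A')` for every short exact sequence
`0 → A' → A → A'' → 0`, natural in the short exact sequence, such that the long
sequence `0 → H^0(A') → H^0(A) → H^0(A'') → H^1(A') → ⋯` is exact. -/
structure DeltaFunctor : Type (max (max (max u₁ u₂) (v₁ + 1)) (v₂ + 1)) where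
  H : ℕ → C ⥤ D
  additive : ∀ n, (H n).Additive
  δ : ∀ (n : ℕ) (S : ShortComplex C), S.ShortExact →
      ((H n).obj S.X₃ ⟶ (H (n + 1)).obj S.X₁)
  δ_natural : ∀ (n : ℕ) (S T : ShortComplex C) (hS : S.ShortExact) (hT : T.ShortExact)
      (φ : S ⟶ T),
      (H n).map φ.τ₃ ≫ δ n T hT = δ n S hS ≫ (H (n + 1)).map φ.τ₁
  mono_first : ∀ (S : ShortComplex C) (hS : S.ShortExact), Mono ((H 0).map S.f)
  zero₁ : ∀ (n : ℕ) (S : ShortComplex C), S.ShortExact →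
      (H n).map S.f ≫ (H n).map S.g = 0
  zero₂ : ∀ (n : ℕ) (S : ShortComplex C) (hS : S.ShortExact),
      (H n).map S.g ≫ δ n S hS = 0
  zero₃ : ∀ (n : ℕ) (S : ShortComplex C) (hS : S.ShortExact),
      δ n S hS ≫ (H (n + 1)).map S.f = 0
  exact₁ : ∀ (n : ℕ) (S : ShortComplex C) (hS : S.ShortExact),
      (ShortComplex.mk _ _ (zero₁ n S hS)).Exact
  exact₂ : ∀ (n : ℕ) (S : ShortComplex C) (hS : S.ShortExact),
      (ShortComplex.mk _ _ (zero₂ n S hS)).Exact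
  exact₃ : ∀ (n : ℕ) (S : ShortComplex C) (hS : S.ShortExact),
      (ShortComplex.mk _ _ (zero₃ n S hS)).Exact

end GroupoidCohomology

namespace GroupoidCohomology

open CategoryTheory Limits

section Aux

variable {C : Type u₁} [Category.{v₁} C] [Abelian C]
variable {D : Type u₂} [Category.{v₂} D] [Abelian D]
variable {I : C ⥤ C} (i : 𝟭 C ⟶ I)

/-- The canonical short complex `A ⟶ I A ⟶ coker (i_A)`. -/
noncomputable abbrev TT (A : C) : ShortComplex C :=
  ShortComplex.mk (i.app A) (cokernel.π (i.app A)) (cokernel.condition _)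

lemma TT_shortExact (hmono : ∀ A : C, Mono (i.app A)) (A : C) :
    (TT i A).ShortExact := by
  haveI := hmono A
  exact ShortComplex.ShortExact.mk'
    (ShortComplex.exact_of_g_is_cokernel _ (cokernelIsCokernel _))
    (hmono A) (by dsimp [TT]; infer_instance)

/-- The morphism `TT i A ⟶ TT i B` induced by `f : A ⟶ B`. -/
noncomputable def TTmap {A B : C} (f : A ⟶ B) : TT i A ⟶ TT i B where
  τ₁ := f
  τ₂ := I.map f
  τ₃ := cokernel.map (i.app A) (i.app B) f (I.map f) (by simpa using (i.naturality f).symm)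
  comm₁₂ := by dsimp only [TT]; simpa using i.naturality f
  comm₂₃ := by
    dsimp [TT]
    simp [cokernel.map]

variable (HH KK : DeltaFunctor C D)

lemma epi_delta_TT (hmono : ∀ A : C, Mono (i.app A))
    (hHv : ∀ (A : C) (m : ℕ), 1 ≤ m → IsZero ((HH.H m).obj (I.obj A)))
    (n : ℕ) (A : C) :
    Epi (HH.δ n (TT i A) (TT_shortExact i hmono A)) := by
  have hz : ((HH.H (n + 1)).map ((TT i A).f)) = 0 :=
    (hHv A (n + 1) (by omega)).eq_zero_of_tgt _
  have h := (ShortComplex.exact_iff_epi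
    (S := ShortComplex.mk (HH.δ n (TT i A) (TT_shortExact i hmono A))
      ((HH.H (n + 1)).map ((TT i A).f))
      (HH.zero₃ n (TT i A) (TT_shortExact i hmono A))) hz).1
    (HH.exact₃ n (TT i A) (TT_shortExact i hmono A))
  exact h

noncomputable def deltaCoker (hmono : ∀ A : C, Mono (i.app A))
    (hHv : ∀ (A : C) (m : ℕ), 1 ≤ m → IsZero ((HH.H m).obj (I.obj A)))
    (n : ℕ) (A : C) :
    IsColimit (CokernelCofork.ofπ (HH.δ n (TT i A) (TT_shortExact i hmono A))
      (HH.zero₂ n (TT i A) (TT_shortExact i hmono A))) := by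
  haveI : Epi ((ShortComplex.mk ((HH.H n).map ((TT i A).g))
      (HH.δ n (TT i A) (TT_shortExact i hmono A))
      (HH.zero₂ n (TT i A) (TT_shortExact i hmono A))).g) :=
    epi_delta_TT i HH hmono hHv n A
  exact (HH.exact₂ n (TT i A) (TT_shortExact i hmono A)).gIsCokernel

noncomputable def stepHomApp (hmono : ∀ A : C, Mono (i.app A))
    (hHv : ∀ (A : C) (m : ℕ), 1 ≤ m → IsZero ((HH.H m).obj (I.obj A)))
    (n : ℕ) (ψ : HH.H n ⟶ KK.H n) (A : C) :
    (HH.H (n + 1)).obj A ⟶ (KK.H (n + 1)).obj A :=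
  (CokernelCofork.IsColimit.desc' (deltaCoker i HH hmono hHv n A)
    (ψ.app ((TT i A).X₃) ≫ KK.δ n (TT i A) (TT_shortExact i hmono A))
    (by
      rw [← Category.assoc, ψ.naturality ((TT i A).g), Category.assoc,
        KK.zero₂ n (TT i A) (TT_shortExact i hmono A), comp_zero])).1

lemma stepHomApp_spec (hmono : ∀ A : C, Mono (i.app A))
    (hHv : ∀ (A : C) (m : ℕ), 1 ≤ m → IsZero ((HH.H m).obj (I.obj A)))
    (n : ℕ) (ψ : HH.H n ⟶ KK.H n) (A : C) :
    HH.δ n (TT i A) (TT_shortExact i hmono A) ≫ stepHomApp i HH KK hmono hHv n ψ A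
      = ψ.app ((TT i A).X₃) ≫ KK.δ n (TT i A) (TT_shortExact i hmono A) :=
  (CokernelCofork.IsColimit.desc' (deltaCoker i HH hmono hHv n A)
    (ψ.app ((TT i A).X₃) ≫ KK.δ n (TT i A) (TT_shortExact i hmono A))
    (by
      rw [← Category.assoc, ψ.naturality ((TT i A).g), Category.assoc,
        KK.zero₂ n (TT i A) (TT_shortExact i hmono A), comp_zero])).2

noncomputable def stepIso (hmono : ∀ A : C, Mono (i.app A))
    (hHv : ∀ (A : C) (m : ℕ), 1 ≤ m → IsZero ((HH.H m).obj (I.obj A)))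
    (hKv : ∀ (A : C) (m : ℕ), 1 ≤ m → IsZero ((KK.H m).obj (I.obj A)))
    (n : ℕ) (ψ : HH.H n ≅ KK.H n) :
    HH.H (n + 1) ≅ KK.H (n + 1) :=
  NatIso.ofComponents (fun A =>
    { hom := stepHomApp i HH KK hmono hHv n ψ.hom A
      inv := stepHomApp i KK HH hmono hKv n ψ.inv A
      hom_inv_id := by
        haveI := epi_delta_TT i HH hmono hHv n A
        refine (cancel_epi (HH.δ n (TT i A) (TT_shortExact i hmono A))).mp ?_
        calc HH.δ n (TT i A) (TT_shortExact i hmono A)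
              ≫ stepHomApp i HH KK hmono hHv n ψ.hom A
              ≫ stepHomApp i KK HH hmono hKv n ψ.inv A
            = (HH.δ n (TT i A) (TT_shortExact i hmono A)
                ≫ stepHomApp i HH KK hmono hHv n ψ.hom A)
                ≫ stepHomApp i KK HH hmono hKv n ψ.inv A := by
              rw [Category.assoc]
          _ = ψ.hom.app ((TT i A).X₃) ≫ KK.δ n (TT i A) (TT_shortExact i hmono A)
                ≫ stepHomApp i KK HH hmono hKv n ψ.inv A := by
              rw [stepHomApp_spec i HH KK hmono hHv n ψ.hom A, Category.assoc]
          _ = ψ.hom.app ((TT i A).X₃) ≫ ψ.inv.app ((TT i A).X₃)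
                ≫ HH.δ n (TT i A) (TT_shortExact i hmono A) := by
              rw [stepHomApp_spec i KK HH hmono hKv n ψ.inv A]
          _ = HH.δ n (TT i A) (TT_shortExact i hmono A) := by
              rw [← Category.assoc, Iso.hom_inv_id_app, Category.id_comp]
          _ = HH.δ n (TT i A) (TT_shortExact i hmono A) ≫ 𝟙 ((HH.H (n + 1)).obj A) :=
              (Category.comp_id _).symm
      inv_hom_id := by
        haveI := epi_delta_TT i KK hmono hKv n A
        refine (cancel_epi (KK.δ n (TT i A) (TT_shortExact i hmono A))).mp ?_
        calc KK.δ n (TT i A) (TT_shortExact i hmono A)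
              ≫ stepHomApp i KK HH hmono hKv n ψ.inv A
              ≫ stepHomApp i HH KK hmono hHv n ψ.hom A
            = (KK.δ n (TT i A) (TT_shortExact i hmono A)
                ≫ stepHomApp i KK HH hmono hKv n ψ.inv A)
                ≫ stepHomApp i HH KK hmono hHv n ψ.hom A := by
              rw [Category.assoc]
          _ = ψ.inv.app ((TT i A).X₃) ≫ HH.δ n (TT i A) (TT_shortExact i hmono A)
                ≫ stepHomApp i HH KK hmono hHv n ψ.hom A := by
              rw [stepHomApp_spec i KK HH hmono hKv n ψ.inv A, Category.assoc]
          _ = ψ.inv.app ((TT i A).X₃) ≫ ψ.hom.app ((TT i A).X₃)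
                ≫ KK.δ n (TT i A) (TT_shortExact i hmono A) := by
              rw [stepHomApp_spec i HH KK hmono hHv n ψ.hom A]
          _ = KK.δ n (TT i A) (TT_shortExact i hmono A) := by
              rw [← Category.assoc, Iso.inv_hom_id_app, Category.id_comp]
          _ = KK.δ n (TT i A) (TT_shortExact i hmono A) ≫ 𝟙 ((KK.H (n + 1)).obj A) :=
              (Category.comp_id _).symm })
    (fun {A B} f => by
      dsimp only
      haveI := epi_delta_TT i HH hmono hHv n A
      rw [← cancel_epi (HH.δ n (TT i A) (TT_shortExact i hmono A))]
      have hH' : (HH.H n).map ((TTmap i f).τ₃) ≫ HH.δ n (TT i B) (TT_shortExact i hmono B)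
          = HH.δ n (TT i A) (TT_shortExact i hmono A) ≫ (HH.H (n + 1)).map f :=
        HH.δ_natural n (TT i A) (TT i B) (TT_shortExact i hmono A)
          (TT_shortExact i hmono B) (TTmap i f)
      have hK' : (KK.H n).map ((TTmap i f).τ₃) ≫ KK.δ n (TT i B) (TT_shortExact i hmono B)
          = KK.δ n (TT i A) (TT_shortExact i hmono A) ≫ (KK.H (n + 1)).map f :=
        KK.δ_natural n (TT i A) (TT i B) (TT_shortExact i hmono A)
          (TT_shortExact i hmono B) (TTmap i f)
      calc HH.δ n (TT i A) (TT_shortExact i hmono A)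
            ≫ (HH.H (n + 1)).map f ≫ stepHomApp i HH KK hmono hHv n ψ.hom B
          = ((HH.H n).map ((TTmap i f).τ₃) ≫ HH.δ n (TT i B) (TT_shortExact i hmono B))
              ≫ stepHomApp i HH KK hmono hHv n ψ.hom B := by
            rw [hH']; simp only [Category.assoc]
        _ = (HH.H n).map ((TTmap i f).τ₃)
              ≫ ψ.hom.app ((TT i B).X₃) ≫ KK.δ n (TT i B) (TT_shortExact i hmono B) := by
            rw [Category.assoc, stepHomApp_spec i HH KK hmono hHv n ψ.hom B]
        _ = ψ.hom.app ((TT i A).X₃)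
              ≫ (KK.H n).map ((TTmap i f).τ₃) ≫ KK.δ n (TT i B) (TT_shortExact i hmono B) := by
            rw [← Category.assoc, ψ.hom.naturality ((TTmap i f).τ₃), Category.assoc]
        _ = ψ.hom.app ((TT i A).X₃)
              ≫ KK.δ n (TT i A) (TT_shortExact i hmono A) ≫ (KK.H (n + 1)).map f := by
            rw [hK']
        _ = HH.δ n (TT i A) (TT_shortExact i hmono A)
              ≫ stepHomApp i HH KK hmono hHv n ψ.hom A ≫ (KK.H (n + 1)).map f := by
            rw [← Category.assoc, ← stepHomApp_spec i HH KK hmono hHv n ψ.hom A,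
              Category.assoc])

end Aux

section Compat

variable {C : Type u₁} [Category.{v₁} C] [Abelian C]
variable {D : Type u₂} [Category.{v₂} D] [Abelian D]
variable {I : C ⥤ C} (i : 𝟭 C ⟶ I)
variable (HH KK : DeltaFunctor C D)

lemma compat (hmono : ∀ A : C, Mono (i.app A))
    (hHv : ∀ (A : C) (m : ℕ), 1 ≤ m → IsZero ((HH.H m).obj (I.obj A)))
    (n : ℕ) (ψ : HH.H n ⟶ KK.H n) (χ : HH.H (n + 1) ⟶ KK.H (n + 1))
    (hcanon : ∀ A : C,
      HH.δ n (TT i A) (TT_shortExact i hmono A) ≫ χ.app A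
        = ψ.app ((TT i A).X₃) ≫ KK.δ n (TT i A) (TT_shortExact i hmono A))
    (S : ShortComplex C) (hS : S.ShortExact) :
    ψ.app S.X₃ ≫ KK.δ n S hS = HH.δ n S hS ≫ χ.app S.X₁ := by
  haveI := hS.mono_f
  haveI := hS.epi_g
  haveI := hmono S.X₁
  haveI := HH.additive n
  -- the pushout of `i.app S.X₁` along `S.f`
  have hw : i.app S.X₁ ≫ (0 : I.obj S.X₁ ⟶ S.X₃) = S.f ≫ S.g := by
    rw [comp_zero, S.zero]
  obtain ⟨M, j, u, p, hiju, hupg, hmj, hmu, hjp, hS'⟩ :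
      ∃ (M : C) (j : I.obj S.X₁ ⟶ M) (u : S.X₂ ⟶ M) (p : M ⟶ S.X₃),
        i.app S.X₁ ≫ j = S.f ≫ u ∧ u ≫ p = S.g ∧ Mono j ∧ Mono u ∧
        ∃ (hjp : j ≫ p = 0), (ShortComplex.mk j p hjp).ShortExact := by
    refine ⟨pushout (i.app S.X₁) S.f, pushout.inl _ _, pushout.inr _ _,
      pushout.desc (0 : I.obj S.X₁ ⟶ S.X₃) S.g hw, pushout.condition,
      pushout.inr_desc _ _ _, inferInstance, inferInstance,
      pushout.inl_desc _ _ _, ?_⟩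
    haveI hepi : Epi (pushout.desc (0 : I.obj S.X₁ ⟶ S.X₃) S.g hw) :=
      epi_of_epi_fac (pushout.inr_desc (0 : I.obj S.X₁ ⟶ S.X₃) S.g hw)
    haveI hepi' : Epi ((ShortComplex.mk (pushout.inl (i.app S.X₁) S.f)
        (pushout.desc (0 : I.obj S.X₁ ⟶ S.X₃) S.g hw)
        (pushout.inl_desc _ _ _)).g) := hepi
    refine ShortComplex.ShortExact.mk' (ShortComplex.exact_of_g_is_cokernel _ ?_)
      (show Mono (pushout.inl (i.app S.X₁) S.f) from inferInstance) hepi'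
    refine CokernelCofork.IsColimit.ofπ' _ _ (fun {W} k hk => ?_)
    dsimp only at hk ⊢
    have hfk : S.f ≫ (pushout.inr (i.app S.X₁) S.f ≫ k) = 0 := by
      rw [← Category.assoc, ← pushout.condition, Category.assoc, hk, comp_zero]
    refine ⟨hS.exact.desc (pushout.inr _ _ ≫ k) hfk, ?_⟩
    apply pushout.hom_ext
    · rw [pushout.inl_desc_assoc, zero_comp, hk]
    · rw [pushout.inr_desc_assoc, hS.exact.g_desc]
  haveI := hmj
  haveI := hmu
  haveI : Mono (S.f ≫ u) := mono_comp _ _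
  have hS'' : (ShortComplex.mk (S.f ≫ u) (cokernel.π (S.f ≫ u))
      (cokernel.condition (S.f ≫ u))).ShortExact :=
    ShortComplex.ShortExact.mk'
      (ShortComplex.exact_of_g_is_cokernel _ (cokernelIsCokernel _))
      (by dsimp only; infer_instance) (by dsimp only; infer_instance)
  -- the maps v, w, q
  obtain ⟨v, hgv⟩ := hS.exact.desc' (u ≫ cokernel.π (S.f ≫ u))
    (by rw [← Category.assoc]; exact cokernel.condition _)
  obtain ⟨w, hπw⟩ := cokernel.desc' (i.app S.X₁) (j ≫ cokernel.π (S.f ≫ u))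
    (by rw [← Category.assoc, hiju, Category.assoc, ← Category.assoc]
        exact cokernel.condition _)
  obtain ⟨q, hπq⟩ := cokernel.desc' (S.f ≫ u) p
    (by rw [Category.assoc, hupg]; exact S.zero)
  have hvq : v ≫ q = 𝟙 S.X₃ := by
    rw [← cancel_epi S.g, ← Category.assoc, hgv, Category.assoc, hπq, hupg, Category.comp_id]
  have hwq : w ≫ q = 0 := by
    rw [← cancel_epi (cokernel.π (i.app S.X₁)), ← Category.assoc, hπw, Category.assoc, hπq,
      hjp, comp_zero]
  -- exactness of (w, q)
  have hexwq : (ShortComplex.mk w q hwq).Exact := by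
    rw [ShortComplex.exact_iff_exact_up_to_refinements]
    intro Z z hz
    dsimp only at z hz ⊢
    obtain ⟨Z', ρ, hρ, m, hm⟩ := surjective_up_to_refinements_of_epi (cokernel.π (S.f ≫ u)) z
    have hmp : m ≫ p = 0 := by
      rw [← hπq, ← Category.assoc, ← hm, Category.assoc, hz, comp_zero]
    obtain ⟨Z'', ρ', hρ', y, hy⟩ := hS'.exact.exact_up_to_refinements m hmp
    have hy' : ρ' ≫ m = y ≫ j := hy
    haveI := hρ
    haveI := hρ'
    refine ⟨Z'', ρ' ≫ ρ, epi_comp _ _, y ≫ cokernel.π (i.app S.X₁), ?_⟩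
    simp only [Category.assoc]
    rw [hm, ← Category.assoc, hy', Category.assoc, hπw]
  -- w is a monomorphism
  have hmw : Mono w := by
    rw [Preadditive.mono_iff_cancel_zero]
    intro Z z hz
    obtain ⟨Z', ρ, hρ, y, hy⟩ := surjective_up_to_refinements_of_epi (cokernel.π (i.app S.X₁)) z
    have h1 : (y ≫ j) ≫ cokernel.π (S.f ≫ u) = 0 := by
      calc (y ≫ j) ≫ cokernel.π (S.f ≫ u)
          = y ≫ cokernel.π (i.app S.X₁) ≫ w := by
            rw [Category.assoc, hπw]
        _ = (ρ ≫ z) ≫ w := by rw [← Category.assoc, ← hy]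
        _ = 0 := by rw [Category.assoc, hz, comp_zero]
    obtain ⟨Z'', ρ', hρ', t, ht⟩ := hS''.exact.exact_up_to_refinements (y ≫ j) h1
    have ht' : ρ' ≫ y ≫ j = t ≫ (S.f ≫ u) := ht
    have h2 : (ρ' ≫ y) ≫ j = (t ≫ i.app S.X₁) ≫ j := by
      simp only [Category.assoc]
      rw [ht', ← hiju]
    have h3 : ρ' ≫ y = t ≫ i.app S.X₁ := by rwa [cancel_mono j] at h2
    have h4 : (ρ' ≫ ρ) ≫ z = 0 := by
      rw [Category.assoc, hy, ← Category.assoc, h3, Category.assoc, cokernel.condition,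
        comp_zero]
    haveI := hρ
    haveI := hρ'
    exact zero_of_epi_comp (ρ' ≫ ρ) h4
  haveI : Mono ((ShortComplex.mk w q hwq).f) := hmw
  -- the retraction r
  obtain ⟨r, hrw⟩ := hexwq.lift' (𝟙 (cokernel (S.f ≫ u)) - q ≫ v)
    (by dsimp only
        rw [Preadditive.sub_comp, Category.id_comp, Category.assoc, hvq, Category.comp_id,
          sub_self])
  have hrw' : r ≫ w = 𝟙 (cokernel (S.f ≫ u)) - q ≫ v := hrw
  -- naturality of δ with respect to the two morphisms of short exact sequences
  have hδHα : (HH.H n).map v ≫ HH.δ n (ShortComplex.mk (S.f ≫ u) (cokernel.π (S.f ≫ u))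
      (cokernel.condition (S.f ≫ u))) hS'' = HH.δ n S hS := by
    have h := HH.δ_natural n S _ hS hS''
      ⟨𝟙 S.X₁, u, v, by dsimp only; rw [Category.id_comp], by dsimp only; exact hgv.symm⟩
    dsimp only at h
    rwa [CategoryTheory.Functor.map_id, Category.comp_id] at h
  have hδKα : (KK.H n).map v ≫ KK.δ n (ShortComplex.mk (S.f ≫ u) (cokernel.π (S.f ≫ u))
      (cokernel.condition (S.f ≫ u))) hS'' = KK.δ n S hS := by
    have h := KK.δ_natural n S _ hS hS''
      ⟨𝟙 S.X₁, u, v, by dsimp only; rw [Category.id_comp], by dsimp only; exact hgv.symm⟩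
    dsimp only at h
    rwa [CategoryTheory.Functor.map_id, Category.comp_id] at h
  have hδHβ : (HH.H n).map w ≫ HH.δ n (ShortComplex.mk (S.f ≫ u) (cokernel.π (S.f ≫ u))
      (cokernel.condition (S.f ≫ u))) hS''
      = HH.δ n (TT i S.X₁) (TT_shortExact i hmono S.X₁) := by
    have h : (HH.H n).map w ≫ HH.δ n (ShortComplex.mk (S.f ≫ u) (cokernel.π (S.f ≫ u))
        (cokernel.condition (S.f ≫ u))) hS''
        = HH.δ n (TT i S.X₁) (TT_shortExact i hmono S.X₁) ≫ (HH.H (n + 1)).map (𝟙 S.X₁) :=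
      HH.δ_natural n (TT i S.X₁) _ (TT_shortExact i hmono S.X₁) hS''
        ⟨𝟙 S.X₁, j, w, (Category.id_comp (S.f ≫ u)).trans hiju.symm, hπw.symm⟩
    have e : ∀ {Y : D} (a : Y ⟶ (HH.H (n + 1)).obj S.X₁),
        a ≫ (HH.H (n + 1)).map (𝟙 S.X₁) = a := by
      intro Y a
      rw [CategoryTheory.Functor.map_id, Category.comp_id]
    exact h.trans (e _)
  have hδKβ : (KK.H n).map w ≫ KK.δ n (ShortComplex.mk (S.f ≫ u) (cokernel.π (S.f ≫ u))
      (cokernel.condition (S.f ≫ u))) hS''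
      = KK.δ n (TT i S.X₁) (TT_shortExact i hmono S.X₁) := by
    have h : (KK.H n).map w ≫ KK.δ n (ShortComplex.mk (S.f ≫ u) (cokernel.π (S.f ≫ u))
        (cokernel.condition (S.f ≫ u))) hS''
        = KK.δ n (TT i S.X₁) (TT_shortExact i hmono S.X₁) ≫ (KK.H (n + 1)).map (𝟙 S.X₁) :=
      KK.δ_natural n (TT i S.X₁) _ (TT_shortExact i hmono S.X₁) hS''
        ⟨𝟙 S.X₁, j, w, (Category.id_comp (S.f ≫ u)).trans hiju.symm, hπw.symm⟩
    have e : ∀ {Y : D} (a : Y ⟶ (KK.H (n + 1)).obj S.X₁),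
        a ≫ (KK.H (n + 1)).map (𝟙 S.X₁) = a := by
      intro Y a
      rw [CategoryTheory.Functor.map_id, Category.comp_id]
    exact h.trans (e _)
  have hcanon' : HH.δ n (TT i S.X₁) (TT_shortExact i hmono S.X₁) ≫ χ.app S.X₁
      = ψ.app (cokernel (i.app S.X₁)) ≫ KK.δ n (TT i S.X₁) (TT_shortExact i hmono S.X₁) :=
    hcanon S.X₁
  have z2H : (HH.H n).map (cokernel.π (S.f ≫ u)) ≫ HH.δ n (ShortComplex.mk (S.f ≫ u)
      (cokernel.π (S.f ≫ u)) (cokernel.condition (S.f ≫ u))) hS'' = 0 :=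
    HH.zero₂ n _ hS''
  have z2K : (KK.H n).map (cokernel.π (S.f ≫ u)) ≫ KK.δ n (ShortComplex.mk (S.f ≫ u)
      (cokernel.π (S.f ≫ u)) (cokernel.condition (S.f ≫ u))) hS'' = 0 :=
    KK.zero₂ n _ hS''
  -- the difference map vanishes after composing with suitable maps
  have h1 : (HH.H n).map w ≫ (ψ.app (cokernel (S.f ≫ u)) ≫ KK.δ n (ShortComplex.mk (S.f ≫ u)
        (cokernel.π (S.f ≫ u)) (cokernel.condition (S.f ≫ u))) hS'')
      = (HH.H n).map w ≫ (HH.δ n (ShortComplex.mk (S.f ≫ u) (cokernel.π (S.f ≫ u))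
        (cokernel.condition (S.f ≫ u))) hS'' ≫ χ.app S.X₁) := by
    rw [reassoc_of% (ψ.naturality w), hδKβ, reassoc_of% hδHβ, hcanon']
  have hw0 : (HH.H n).map w ≫ (ψ.app (cokernel (S.f ≫ u)) ≫ KK.δ n (ShortComplex.mk (S.f ≫ u)
        (cokernel.π (S.f ≫ u)) (cokernel.condition (S.f ≫ u))) hS''
      - HH.δ n (ShortComplex.mk (S.f ≫ u) (cokernel.π (S.f ≫ u))
        (cokernel.condition (S.f ≫ u))) hS'' ≫ χ.app S.X₁) = 0 := by
    rw [Preadditive.comp_sub, h1, sub_self]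
  have hπ0 : (HH.H n).map (cokernel.π (S.f ≫ u)) ≫ (ψ.app (cokernel (S.f ≫ u))
        ≫ KK.δ n (ShortComplex.mk (S.f ≫ u) (cokernel.π (S.f ≫ u))
          (cokernel.condition (S.f ≫ u))) hS''
      - HH.δ n (ShortComplex.mk (S.f ≫ u) (cokernel.π (S.f ≫ u))
        (cokernel.condition (S.f ≫ u))) hS'' ≫ χ.app S.X₁) = 0 := by
    rw [Preadditive.comp_sub, reassoc_of% (ψ.naturality (cokernel.π (S.f ≫ u))), z2K,
      comp_zero, reassoc_of% z2H, zero_comp, sub_zero]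
  have hdecomp : (ψ.app (cokernel (S.f ≫ u)) ≫ KK.δ n (ShortComplex.mk (S.f ≫ u)
        (cokernel.π (S.f ≫ u)) (cokernel.condition (S.f ≫ u))) hS''
      - HH.δ n (ShortComplex.mk (S.f ≫ u) (cokernel.π (S.f ≫ u))
        (cokernel.condition (S.f ≫ u))) hS'' ≫ χ.app S.X₁)
      = (HH.H n).map q ≫ ((HH.H n).map v ≫ (ψ.app (cokernel (S.f ≫ u))
        ≫ KK.δ n (ShortComplex.mk (S.f ≫ u) (cokernel.π (S.f ≫ u))
          (cokernel.condition (S.f ≫ u))) hS''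
      - HH.δ n (ShortComplex.mk (S.f ≫ u) (cokernel.π (S.f ≫ u))
        (cokernel.condition (S.f ≫ u))) hS'' ≫ χ.app S.X₁)) := by
    conv_lhs => rw [← Category.id_comp (ψ.app (cokernel (S.f ≫ u))
      ≫ KK.δ n (ShortComplex.mk (S.f ≫ u) (cokernel.π (S.f ≫ u))
        (cokernel.condition (S.f ≫ u))) hS''
      - HH.δ n (ShortComplex.mk (S.f ≫ u) (cokernel.π (S.f ≫ u))
        (cokernel.condition (S.f ≫ u))) hS'' ≫ χ.app S.X₁),
      ← CategoryTheory.Functor.map_id (HH.H n) (cokernel (S.f ≫ u)),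
      show 𝟙 (cokernel (S.f ≫ u)) = r ≫ w + q ≫ v from by rw [hrw']; abel,
      Functor.map_add, Preadditive.add_comp, Functor.map_comp, Functor.map_comp,
      Category.assoc, Category.assoc, hw0, comp_zero, zero_add]
  have hp0 : (HH.H n).map p ≫ ((HH.H n).map v ≫ (ψ.app (cokernel (S.f ≫ u))
        ≫ KK.δ n (ShortComplex.mk (S.f ≫ u) (cokernel.π (S.f ≫ u))
          (cokernel.condition (S.f ≫ u))) hS''
      - HH.δ n (ShortComplex.mk (S.f ≫ u) (cokernel.π (S.f ≫ u))
        (cokernel.condition (S.f ≫ u))) hS'' ≫ χ.app S.X₁)) = 0 := by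
    rw [← hπq, Functor.map_comp, Category.assoc, ← hdecomp, hπ0]
  haveI hepiHp : Epi ((HH.H n).map p) := by
    have hz : HH.δ n (ShortComplex.mk j p hjp) hS' = 0 :=
      (hHv S.X₁ (n + 1) (by omega)).eq_zero_of_tgt _
    exact (ShortComplex.exact_iff_epi
      (S := ShortComplex.mk ((HH.H n).map ((ShortComplex.mk j p hjp).g))
        (HH.δ n (ShortComplex.mk j p hjp) hS')
        (HH.zero₂ n (ShortComplex.mk j p hjp) hS')) hz).1
      (HH.exact₂ n (ShortComplex.mk j p hjp) hS')
  have hv0 : (HH.H n).map v ≫ (ψ.app (cokernel (S.f ≫ u))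
        ≫ KK.δ n (ShortComplex.mk (S.f ≫ u) (cokernel.π (S.f ≫ u))
          (cokernel.condition (S.f ≫ u))) hS''
      - HH.δ n (ShortComplex.mk (S.f ≫ u) (cokernel.π (S.f ≫ u))
        (cokernel.condition (S.f ≫ u))) hS'' ≫ χ.app S.X₁) = 0 :=
    zero_of_epi_comp ((HH.H n).map p) hp0
  rw [Preadditive.comp_sub, sub_eq_zero] at hv0
  rw [← hδKα, ← hδHα, ← reassoc_of% (ψ.naturality v)]
  simp only [Category.assoc] at hv0 ⊢
  exact hv0

end Compat

section Final

variable {C : Type u₁} [Category.{v₁} C] [Abelian C]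
variable {D : Type u₂} [Category.{v₂} D] [Abelian D]
variable {I : C ⥤ C} (i : 𝟭 C ⟶ I)
variable (HH KK : DeltaFunctor C D)

noncomputable def phiSeq (hmono : ∀ A : C, Mono (i.app A))
    (hHv : ∀ (A : C) (m : ℕ), 1 ≤ m → IsZero ((HH.H m).obj (I.obj A)))
    (hKv : ∀ (A : C) (m : ℕ), 1 ≤ m → IsZero ((KK.H m).obj (I.obj A)))
    (e0 : HH.H 0 ≅ KK.H 0) : ∀ n : ℕ, HH.H n ≅ KK.H n :=
  fun n => Nat.rec e0 (fun m ih => stepIso i HH KK hmono hHv hKv m ih) n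

lemma phiSeq_canon (hmono : ∀ A : C, Mono (i.app A))
    (hHv : ∀ (A : C) (m : ℕ), 1 ≤ m → IsZero ((HH.H m).obj (I.obj A)))
    (hKv : ∀ (A : C) (m : ℕ), 1 ≤ m → IsZero ((KK.H m).obj (I.obj A)))
    (e0 : HH.H 0 ≅ KK.H 0) (n : ℕ) (A : C) :
    HH.δ n (TT i A) (TT_shortExact i hmono A)
        ≫ (phiSeq i HH KK hmono hHv hKv e0 (n + 1)).hom.app A
      = (phiSeq i HH KK hmono hHv hKv e0 n).hom.app ((TT i A).X₃)
        ≫ KK.δ n (TT i A) (TT_shortExact i hmono A) :=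
  stepHomApp_spec i HH KK hmono hHv n (phiSeq i HH KK hmono hHv hKv e0 n).hom A

end Final

/-- **Statement 13** (uniqueness, Proposition 5.1(a)). Let `F : C₁ → C₂` be a left
exact additive functor between abelian categories, `I : C₁ → C₁` a functor and
`i : Id → I` a natural monomorphism. Then up to (compatible natural) isomorphism there
is at most one δ-functor `(H^n)` with `H^0 = F` and `H^n(I(A)) = 0` for `n ≥ 1`. -/
theorem statement_13 (C : Type u₁) [Category.{v₁} C] [Abelian C]
    (D : Type u₂) [Category.{v₂} D] [Abelian D]
    (F : C ⥤ D) (hFadd : F.Additive) (hFlex : PreservesFiniteLimits F)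
    (I : C ⥤ C) (i : 𝟭 C ⟶ I) (hmono : ∀ A : C, Mono (i.app A))
    (HH KK : DeltaFunctor C D)
    (eH : HH.H 0 ≅ F) (eK : KK.H 0 ≅ F)
    (hHvanish : ∀ (A : C) (n : ℕ), 1 ≤ n → IsZero ((HH.H n).obj (I.obj A)))
    (hKvanish : ∀ (A : C) (n : ℕ), 1 ≤ n → IsZero ((KK.H n).obj (I.obj A))) :
    ∃ φ : ∀ n : ℕ, HH.H n ≅ KK.H n,
      (φ 0 = eH ≪≫ eK.symm) ∧
      (∀ (n : ℕ) (S : ShortComplex C) (hS : S.ShortExact),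
        (φ n).hom.app S.X₃ ≫ KK.δ n S hS
          = HH.δ n S hS ≫ (φ (n + 1)).hom.app S.X₁) := by
  refine ⟨phiSeq i HH KK hmono hHvanish hKvanish (eH ≪≫ eK.symm), rfl, fun n S hS => ?_⟩
  exact compat i HH KK hmono hHvanish n
    (phiSeq i HH KK hmono hHvanish hKvanish (eH ≪≫ eK.symm) n).hom
    (phiSeq i HH KK hmono hHvanish hKvanish (eH ≪≫ eK.symm) (n + 1)).hom
    (fun A => phiSeq_canon i HH KK hmono hHvanish hKvanish (eH ≪≫ eK.symm) n A) S hS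

end GroupoidCohomology
end
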